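/- arXiv:1607.03466 — 2 statements merged into one kernel-verified Lean document; each statement's English description precedes it below -/
import Mathlib

section
/- Let h ∈ ℂ[z] be a polynomial and let Δ_i ∈ ℂ[z_1,…,z_{i+1}] denote its iterated divided differences. Let z_1,…,z_m be pairwise distinct complex numbers, let r_1,…,r_m be positive integers with k = r_1 + … + r_m ≥ 2, and let (w_1,…,w_k) be the sequence consisting of z_1 repeated r_1 times, followed by z_2 repeated r_2 times, …, followed by z_m repeated r_m times. Then Δ_i(w_1,…,w_{i+1}) = 0 for all 1 ≤ i ≤ k−1 if and only if, for every 1 ≤ j ≤ m, the polynomial (z − z_j)^{r_j} divides h(z) − h(z_1) in ℂ[z]. -/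
open MvPolynomial Finset

noncomputable def natOptEquiv : ℕ ≃ Option ℕ := (Denumerable.eqv (Option ℕ)).symm

noncomputable def moveEquiv (n : ℕ) : ℕ ≃ Option ℕ :=
  (Equiv.swap n (natOptEquiv.symm none)).trans natOptEquiv

lemma moveEquiv_n (n : ℕ) : moveEquiv n n = none := by
  simp [moveEquiv, natOptEquiv]

lemma moveEquiv_ne (n t : ℕ) : (moveEquiv n).symm (some t) ≠ n := by
  intro hh
  have := congrArg (moveEquiv n) hh
  rw [Equiv.apply_symm_apply, moveEquiv_n] at this
  exact Option.some_ne_none _ this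

/-- key cancellation lemma: a factor of a polynomial not involving `n`,
whose cofactor is `X a - X b` with `a,b ≠ n`, does not involve `n`. -/
lemma notMem_vars_of_factor {p q : MvPolynomial ℕ ℂ} {a b n : ℕ}
    (hab : a ≠ b) (hn : n ∉ q.vars) (hna : n ≠ a) (hnb : n ≠ b)
    (heq : (X a - X b) * p = q) : n ∉ p.vars := by
  classical
  set e := moveEquiv n with he
  set Φ : MvPolynomial ℕ ℂ ≃ₐ[ℂ] Polynomial (MvPolynomial ℕ ℂ) :=
    (renameEquiv ℂ e).trans (optionEquivLeft ℂ ℕ) with hΦ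
  set g : ℕ → ℕ := fun t => e.symm (some t) with hg
  have hginj : Function.Injective g := fun s t hst => by
    have := congrArg e hst
    simpa [hg] using this
  have hgn : ∀ t, g t ≠ n := fun t => moveEquiv_ne n t
  -- q = rename g q₀
  obtain ⟨q₀, hq₀⟩ := exists_rename_eq_of_vars_subset_range q g hginj (by
    intro t ht
    rcases Classical.em (t = n) with rfl | hne
    · exact absurd ht hn
    · refine ⟨(e t).get ?_, ?_⟩
      · cases hto : e t with
        | none =>
            exfalso; apply hne
            have : e t = e n := by rw [hto, he, moveEquiv_n]
            exact e.injective this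
        | some s => simp [hto]
      · simp [hg])
  -- rename some then optionEquivLeft = C
  have hCren : ∀ (c : MvPolynomial ℕ ℂ),
      (optionEquivLeft ℂ ℕ) (rename some c) = Polynomial.C c := by
    intro c
    have : (optionEquivLeft ℂ ℕ).toAlgHom.comp (rename (some : ℕ → Option ℕ))
        = Polynomial.CAlgHom := by
      apply algHom_ext; intro i
      simp [optionEquivLeft_X_some, Polynomial.CAlgHom]
    exact congrArg (fun (f : MvPolynomial ℕ ℂ →ₐ[ℂ] Polynomial (MvPolynomial ℕ ℂ)) => f c) this
  have hΦrg : ∀ (c : MvPolynomial ℕ ℂ), Φ (rename g c) = Polynomial.C c := by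
    intro c
    have : (rename e ∘ rename g) c = rename some c := by
      rw [Function.comp_apply, rename_rename]
      have hfun : ⇑e ∘ g = some := by funext t; simp [hg]
      rw [hfun]
    simp only [hΦ, AlgEquiv.trans_apply, renameEquiv_apply]
    rw [show (rename (⇑e) (rename g c)) = rename some c from this]
    exact hCren c
  -- apply Φ to heq
  have hXa : e a ≠ none := fun hh => hna (e.injective (by rw [hh, he, moveEquiv_n])).symm
  have hXb : e b ≠ none := fun hh => hnb (e.injective (by rw [hh, he, moveEquiv_n])).symm
  obtain ⟨a', ha'⟩ := Option.ne_none_iff_exists'.mp hXa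
  obtain ⟨b', hb'⟩ := Option.ne_none_iff_exists'.mp hXb
  have hΦX : Φ (X a - X b) = Polynomial.C (X a' - X b') := by
    simp only [hΦ, map_sub, AlgEquiv.trans_apply, renameEquiv_apply, rename_X]
    rw [ha', hb', optionEquivLeft_X_some, optionEquivLeft_X_some]
  have hmain : Polynomial.C (X a' - X b' : MvPolynomial ℕ ℂ) * Φ p = Polynomial.C q₀ := by
    rw [← hΦX, ← map_mul, heq, ← hq₀, hΦrg]
  have hab' : (X a' - X b' : MvPolynomial ℕ ℂ) ≠ 0 := by
    intro hh
    apply hab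
    have h1 : (X a' : MvPolynomial ℕ ℂ) = X b' := by linear_combination hh
    have := X_injective h1
    subst this
    have : e a = e b := by rw [ha', hb']
    exact e.injective this
  rcases Classical.em (Φ p = 0) with hp0 | hp0
  · have : p = 0 := by
      have := Φ.injective (hp0.trans (map_zero Φ).symm)
      simpa using this
    simp [this]
  have hdeg : (Φ p).natDegree = 0 := by
    have h1 : (Polynomial.C (X a' - X b' : MvPolynomial ℕ ℂ)).natDegree
        + (Φ p).natDegree = 0 := by
      rw [← Polynomial.natDegree_mul (Polynomial.C_ne_zero.mpr hab') hp0, hmain,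
        Polynomial.natDegree_C]
    omega
  obtain ⟨cp, hcp⟩ := Polynomial.natDegree_eq_zero.mp hdeg
  have hpr : p = rename g cp := by
    apply Φ.injective
    rw [hΦrg, hcp]
  intro hmem
  rw [hpr] at hmem
  obtain ⟨t, _, hgt⟩ := Finset.mem_image.mp (vars_rename g cp hmem)
  exact hgn t hgt
section Aux
variable (h : Polynomial ℂ) (Δ : ℕ → MvPolynomial ℕ ℂ)
    (hΔ0 : Δ 0 = Polynomial.aeval (X 0) h)
    (hrec : ∀ i : ℕ, (X i - X (i + 1)) * Δ (i + 1)
        = Δ i - rename (fun t => if t = i then i + 1 else t) (Δ i))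

include hΔ0 hrec in
lemma vars_delta : ∀ i n : ℕ, i + 1 ≤ n → n ∉ (Δ i).vars := by
  intro i
  induction i with
  | zero =>
      intro n hn hmem
      have hform : Δ 0 = rename (fun _ : Unit => (0:ℕ)) (Polynomial.aeval (X ()) h) := by
        rw [hΔ0, ← Polynomial.aeval_algHom_apply]
        simp
      rw [hform] at hmem
      obtain ⟨t, _, ht⟩ := Finset.mem_image.mp (vars_rename _ _ hmem)
      omega
  | succ i ih =>
      intro n hn
      set ρ : ℕ → ℕ := fun t => if t = i then i + 1 else t with hρ
      have hq : n ∉ (Δ i - rename ρ (Δ i)).vars := by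
        intro hmem
        have h1 : n ∉ (Δ i).vars := ih n (by omega)
        have h2 : n ∉ (rename ρ (Δ i)).vars := by
          intro hmem2
          obtain ⟨t, htv, ht⟩ := Finset.mem_image.mp (vars_rename _ _ hmem2)
          have : t ≤ i := by
            by_contra hc
            exact ih t (by omega) htv
          have : ρ t ≤ i + 1 := by simp only [hρ]; split <;> omega
          omega
        have := vars_add_subset (Δ i) (-(rename ρ (Δ i)))
        rw [← sub_eq_add_neg] at this
        rcases Finset.mem_union.mp (this hmem) with hh | hh
        · exact h1 hh
        · rw [vars_neg] at hh; exact h2 hh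
      exact notMem_vars_of_factor (by omega) hq (by omega) (by omega) (hrec i)

end Aux

section Aux2
variable (h : Polynomial ℂ) (Δ : ℕ → MvPolynomial ℕ ℂ)
    (hΔ0 : Δ 0 = Polynomial.aeval (X 0) h)
    (hrec : ∀ i : ℕ, (X i - X (i + 1)) * Δ (i + 1)
        = Δ i - rename (fun t => if t = i then i + 1 else t) (Δ i))
    (w : ℕ → ℂ)

/-- substitution sending variable `i` to `X` and everything else to constants `w t` -/
noncomputable def subst (w : ℕ → ℂ) (i : ℕ) : ℕ → Polynomial ℂ :=
  fun t => if t = i then Polynomial.X else Polynomial.C (w t)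

lemma eval_subst (p : MvPolynomial ℕ ℂ) (i : ℕ) :
    Polynomial.eval (w i) (aeval (subst w i) p) = eval w p := by
  have : (Polynomial.evalRingHom (w i)).comp (aeval (subst w i) :
      MvPolynomial ℕ ℂ →ₐ[ℂ] Polynomial ℂ).toRingHom = (eval w : MvPolynomial ℕ ℂ →+* ℂ) := by
    apply MvPolynomial.ringHom_ext
    · intro a; simp
    · intro t
      simp only [RingHom.comp_apply, AlgHom.toRingHom_eq_coe, RingHom.coe_coe, aeval_X,
        Polynomial.coe_evalRingHom, eval_X, subst]
      split
      · rename_i hh; subst hh; simp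
      · simp
  exact congrFun (congrArg (fun (f : MvPolynomial ℕ ℂ →+* ℂ) => ⇑f) this) p

include hΔ0 in
lemma subst_delta_zero : aeval (subst w 0) (Δ 0) = h := by
  rw [hΔ0, ← Polynomial.aeval_algHom_apply]
  simp [subst]

include hΔ0 hrec in
lemma subst_delta_step (i : ℕ) :
    aeval (subst w i) (Δ i) = Polynomial.C (eval w (Δ i))
      + (Polynomial.X - Polynomial.C (w i)) * aeval (subst w (i+1)) (Δ (i+1)) := by
  have hv := vars_delta h Δ hΔ0 hrec i
  have H := congrArg (aeval (subst w (i+1)) : MvPolynomial ℕ ℂ →ₐ[ℂ] Polynomial ℂ) (hrec i)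
  rw [map_mul, map_sub, map_sub, aeval_X, aeval_X] at H
  have hsi : subst w (i+1) i = Polynomial.C (w i) := by simp [subst]
  have hsi1 : subst w (i+1) (i+1) = Polynomial.X := by simp [subst]
  rw [hsi, hsi1] at H
  -- first term : constant
  have hT1 : aeval (subst w (i+1)) (Δ i) = Polynomial.C (eval w (Δ i)) := by
    have : (aeval (subst w (i+1)) : MvPolynomial ℕ ℂ →ₐ[ℂ] Polynomial ℂ).toRingHom (Δ i)
        = ((Polynomial.C : ℂ →+* Polynomial ℂ).comp
            (eval w : MvPolynomial ℕ ℂ →+* ℂ)) (Δ i) :=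
      hom_congr_vars (by ext a <;> simp) (fun t htv _ => by
        have ht : t ≤ i := by by_contra hc; exact hv t (by omega) htv
        simp only [AlgHom.toRingHom_eq_coe, RingHom.coe_coe, aeval_X, RingHom.comp_apply, eval_X]
        simp only [subst]
        rw [if_neg (by omega)]) rfl
    simpa using this
  -- second term : equals aeval (subst w i) (Δ i)
  have hT2 : aeval (subst w (i+1)) (rename (fun t => if t = i then i + 1 else t) (Δ i))
      = aeval (subst w i) (Δ i) := by
    rw [aeval_rename]
    have : ((aeval ((subst w (i+1)) ∘ (fun t => if t = i then i + 1 else t)) :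
        MvPolynomial ℕ ℂ →ₐ[ℂ] Polynomial ℂ)).toRingHom (Δ i)
        = ((aeval (subst w i) : MvPolynomial ℕ ℂ →ₐ[ℂ] Polynomial ℂ)).toRingHom (Δ i) :=
      hom_congr_vars (by ext a <;> simp) (fun t htv _ => by
        have ht : t ≤ i := by by_contra hc; exact hv t (by omega) htv
        simp only [AlgHom.toRingHom_eq_coe, RingHom.coe_coe, aeval_X, Function.comp_apply]
        rcases Classical.em (t = i) with rfl | hne
        · simp [subst]
        · rw [if_neg hne]; simp only [subst]; rw [if_neg hne, if_neg (by omega)]) rfl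
    simpa using this
  rw [hT1, hT2] at H
  linear_combination H

include hΔ0 hrec in
lemma newton : ∀ i : ℕ,
    h = (∑ j ∈ Finset.range i, Polynomial.C (eval w (Δ j))
          * ∏ t ∈ Finset.range j, (Polynomial.X - Polynomial.C (w t)))
      + aeval (subst w i) (Δ i) * ∏ t ∈ Finset.range i, (Polynomial.X - Polynomial.C (w t)) := by
  intro i
  induction i with
  | zero => simp [subst_delta_zero h Δ hΔ0 w]
  | succ i ih =>
      rw [ih, subst_delta_step h Δ hΔ0 hrec w i, Finset.sum_range_succ, Finset.prod_range_succ]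
      ring

end Aux2

lemma blocks (m : ℕ) (z : ℕ → ℂ) (r : ℕ → ℕ) (w : ℕ → ℂ)
    (hw : ∀ j < m, ∀ t : ℕ, (∑ l ∈ Finset.range j, r l) ≤ t →
        t < ∑ l ∈ Finset.range (j + 1), r l → w t = z j) :
    ∀ M ≤ m, ∏ t ∈ Finset.range (∑ l ∈ Finset.range M, r l),
        (Polynomial.X - Polynomial.C (w t))
      = ∏ j ∈ Finset.range M, (Polynomial.X - Polynomial.C (z j)) ^ (r j) := by
  intro M
  induction M with
  | zero => simp
  | succ M ih =>
      intro hM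
      rw [Finset.sum_range_succ, Finset.prod_range_add, ih (by omega),
        Finset.prod_range_succ]
      congr 1
      have : ∀ t ∈ Finset.range (r M),
          (Polynomial.X - Polynomial.C (w ((∑ l ∈ Finset.range M, r l) + t)))
            = Polynomial.X - Polynomial.C (z M) := by
        intro t ht
        rw [hw M (by omega) _ (by omega)
          (by rw [Finset.sum_range_succ]; simp at ht; omega)]
      rw [Finset.prod_congr rfl this, Finset.prod_const, Finset.card_range]



/-- (Hermite interpolation characterization.) Let `h ∈ ℂ[z]` with
iterated divided differences `Δᵢ ∈ ℂ[z₁,…,z_{i+1}]`. Let `z₁,…,z_m` be pairwise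
distinct, `r₁,…,r_m` positive with `k = r₁ + … + r_m ≥ 2`, and let `(w₁,…,w_k)` be
`z₁` repeated `r₁` times, …, `z_m` repeated `r_m` times. Then `Δᵢ(w₁,…,w_{i+1}) = 0`
for all `1 ≤ i ≤ k−1` iff `(z − z_j)^{r_j} ∣ h(z) − h(z₁)` for every `1 ≤ j ≤ m`.
Indexing is 0-based: `z_j = z (j-1)`, `w_t = w (t-1)`, and the variable `z_j` of
`Δᵢ` is `X (j-1) : MvPolynomial ℕ ℂ`. -/
theorem divided_differences_vanish_iff_hermite
    (h : Polynomial ℂ) (Δ : ℕ → MvPolynomial ℕ ℂ)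
    (hΔ0 : Δ 0 = Polynomial.aeval (X 0) h)
    (hrec : ∀ i : ℕ, (X i - X (i + 1)) * Δ (i + 1)
        = Δ i - rename (fun t => if t = i then i + 1 else t) (Δ i))
    (m : ℕ) (z : ℕ → ℂ) (r : ℕ → ℕ)
    (hz : ∀ j < m, ∀ l < m, j ≠ l → z j ≠ z l)
    (hr : ∀ j < m, 0 < r j)
    (k : ℕ) (hksum : k = ∑ j ∈ Finset.range m, r j) (hk : 2 ≤ k)
    (w : ℕ → ℂ)
    (hw : ∀ j < m, ∀ t : ℕ, (∑ l ∈ Finset.range j, r l) ≤ t →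
        t < ∑ l ∈ Finset.range (j + 1), r l → w t = z j) :
    (∀ i : ℕ, 1 ≤ i → i ≤ k - 1 → MvPolynomial.eval w (Δ i) = 0) ↔
      (∀ j < m, (Polynomial.X - Polynomial.C (z j)) ^ (r j) ∣
          (h - Polynomial.C (Polynomial.eval (z 0) h))) := by
  have hm : 0 < m := by
    by_contra hc
    have : m = 0 := by omega
    subst this; simp at hksum; omega
  have hw0 : w 0 = z 0 := by
    apply hw 0 hm 0 (by simp)
    simpa using hr 0 hm
  -- c 0 = h (z 0)
  have hc0 : eval w (Δ 0) = Polynomial.eval (z 0) h := by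
    rw [← eval_subst w (Δ 0) 0, subst_delta_zero h Δ hΔ0 w, hw0]
  set ω : Polynomial ℂ := ∏ t ∈ Finset.range k, (Polynomial.X - Polynomial.C (w t)) with hω
  have hωblocks : ω = ∏ j ∈ Finset.range m, (Polynomial.X - Polynomial.C (z j)) ^ (r j) := by
    rw [hω, hksum]; exact blocks m z r w hw m le_rfl
  constructor
  · -- forward
    intro hvan j hj
    have hsum : (∑ j ∈ Finset.range k, Polynomial.C (eval w (Δ j))
          * ∏ t ∈ Finset.range j, (Polynomial.X - Polynomial.C (w t)))
        = Polynomial.C (Polynomial.eval (z 0) h) := by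
      rw [Finset.sum_eq_single_of_mem 0 (Finset.mem_range.mpr (by omega))]
      · simp [hc0]
      · intro b hb hb0
        rw [hvan b (by omega) (by simp at hb; omega)]
        simp
    have hfact : h - Polynomial.C (Polynomial.eval (z 0) h)
        = aeval (subst w k) (Δ k) * ω := by
      have hne := newton h Δ hΔ0 hrec w k
      rw [hsum] at hne
      rw [hω]
      linear_combination hne
    have hωd : ω ∣ h - Polynomial.C (Polynomial.eval (z 0) h) :=
      ⟨aeval (subst w k) (Δ k), by linear_combination hfact⟩
    refine dvd_trans ?_ hωd
    rw [hωblocks]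
    exact Finset.dvd_prod_of_mem _ (Finset.mem_range.mpr hj)
  · -- backward
    intro hdvd
    have hωdvd : ω ∣ h - Polynomial.C (Polynomial.eval (z 0) h) := by
      rw [hωblocks]
      refine Finset.prod_dvd_of_coprime ?_ (fun j hj => hdvd j (Finset.mem_range.mp hj))
      intro j hj l hl hjl
      exact (Polynomial.isCoprime_X_sub_C_of_isUnit_sub
        (sub_ne_zero_of_ne (hz j (Finset.mem_range.mp (Finset.mem_coe.mp hj))
          l (Finset.mem_range.mp (Finset.mem_coe.mp hl)) hjl)).isUnit).pow
    -- strong induction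
    intro i hi1 hik
    induction i using Nat.strong_induction_on with
    | _ i ih =>
    have hik' : i < k := by omega
    have hsum : (∑ j ∈ Finset.range i, Polynomial.C (eval w (Δ j))
          * ∏ t ∈ Finset.range j, (Polynomial.X - Polynomial.C (w t)))
        = Polynomial.C (Polynomial.eval (z 0) h) := by
      rw [Finset.sum_eq_single_of_mem 0 (Finset.mem_range.mpr (by omega))]
      · simp [hc0]
      · intro b hb hb0
        rw [ih b (by simp at hb; omega) (by omega) (by simp at hb; omega)]
        simp
    have hfact : aeval (subst w i) (Δ i)
          * ∏ t ∈ Finset.range i, (Polynomial.X - Polynomial.C (w t))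
        = h - Polynomial.C (Polynomial.eval (z 0) h) := by
      have hne := newton h Δ hΔ0 hrec w i
      rw [hsum] at hne
      linear_combination -hne
    have hdvd2 : (∏ t ∈ Finset.range (i+1), (Polynomial.X - Polynomial.C (w t)))
        ∣ aeval (subst w i) (Δ i)
          * ∏ t ∈ Finset.range i, (Polynomial.X - Polynomial.C (w t)) := by
      rw [hfact]
      exact dvd_trans (Finset.prod_dvd_prod_of_subset _ _ _
        (Finset.range_subset_range.mpr (by omega))) hωdvd
    rw [Finset.prod_range_succ] at hdvd2
    obtain ⟨u, hu⟩ := hdvd2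
    have hωi : (∏ t ∈ Finset.range i, (Polynomial.X - Polynomial.C (w t))) ≠ 0 := by
      rw [Finset.prod_ne_zero_iff]
      intro t _
      exact Polynomial.X_sub_C_ne_zero (w t)
    have hqi : aeval (subst w i) (Δ i) = (Polynomial.X - Polynomial.C (w i)) * u := by
      apply mul_right_cancel₀ hωi
      rw [hu]; ring
    have : Polynomial.eval (w i) (aeval (subst w i) (Δ i)) = 0 := by
      rw [hqi]; simp
    rw [eval_subst w (Δ i) i] at this
    exact this
end

section
/- Let I be the ideal of the polynomial ring ℂ[z_1,z_2] generated by z_1 + z_2 and z_1² + z_1z_2 + z_2². Then the quotient ring ℂ[z_1,z_2]/I is a ℂ-vector space of dimension 2, and I is not a radical ideal: z_1 belongs to the radical of I but z_1 does not belong to I. -/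
/-!
The quotient is the ring of dual numbers: `z₁ ↦ ε, z₂ ↦ -ε` kills both generators of `I`
(the second becomes `ε² = 0`), and conversely `ε ↦ z₁` is well defined on the quotient because
`z₁² = (z₁² + z₁z₂ + z₂²) - z₂(z₁ + z₂) ∈ I`. Hence `ℂ[z₁,z₂]/I ≃ ℂ[ε]` has dimension 2, and
`z₁`, which goes to `ε`, is nilpotent but nonzero modulo `I`.
-/

open MvPolynomial DualNumber TrivSqZeroExt

noncomputable section CuspDoublePoint

variable (R : Type*) [CommRing R]

abbrev cuspDoublePointIdeal : Ideal (MvPolynomial (Fin 2) R) :=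
  Ideal.span {X 0 + X 1, X 0 ^ 2 + X 0 * X 1 + X 1 ^ 2}

theorem X_zero_add_X_one_mem_cuspDoublePointIdeal :
    (X 0 + X 1 : MvPolynomial (Fin 2) R) ∈ cuspDoublePointIdeal R :=
  Ideal.subset_span (Set.mem_insert _ _)

theorem X_zero_sq_mem_cuspDoublePointIdeal :
    (X 0 ^ 2 : MvPolynomial (Fin 2) R) ∈ cuspDoublePointIdeal R :=
  Ideal.mem_span_pair.mpr ⟨-X 1, 1, by ring⟩

theorem cuspDoublePointIdeal_le_ker_aeval :
    cuspDoublePointIdeal R ≤ RingHom.ker (aeval ![(ε : R[ε]), -ε]) := by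
  rw [Ideal.span_le, Set.pair_subset_iff]
  constructor <;> simp [sq, eps_mul_eps]

def cuspQuotToDualNumber :
    MvPolynomial (Fin 2) R ⧸ cuspDoublePointIdeal R →ₐ[R] R[ε] :=
  Ideal.Quotient.liftₐ _ (aeval ![ε, -ε]) fun _ h => cuspDoublePointIdeal_le_ker_aeval R h

def dualNumberToCuspQuot :
    R[ε] →ₐ[R] MvPolynomial (Fin 2) R ⧸ cuspDoublePointIdeal R :=
  DualNumber.lift ⟨(Algebra.ofId _ _, Ideal.Quotient.mk _ (X 0)), by
    rw [← map_mul, ← sq, Ideal.Quotient.eq_zero_iff_mem]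
    exact X_zero_sq_mem_cuspDoublePointIdeal R, fun _ => Commute.all _ _⟩

@[simp]
theorem cuspQuotToDualNumber_mk (p : MvPolynomial (Fin 2) R) :
    cuspQuotToDualNumber R (Ideal.Quotient.mk _ p) = aeval ![ε, -ε] p :=
  rfl

theorem mk_X_one_eq_neg_mk_X_zero :
    Ideal.Quotient.mk (cuspDoublePointIdeal R) (X 1) = -Ideal.Quotient.mk _ (X 0) := by
  rw [eq_neg_iff_add_eq_zero, add_comm, ← map_add, Ideal.Quotient.eq_zero_iff_mem]
  exact X_zero_add_X_one_mem_cuspDoublePointIdeal R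

def cuspQuotEquivDualNumber :
    (MvPolynomial (Fin 2) R ⧸ cuspDoublePointIdeal R) ≃ₐ[R] R[ε] :=
  AlgEquiv.ofAlgHom (cuspQuotToDualNumber R) (dualNumberToCuspQuot R)
    (DualNumber.algHom_ext <| by simp [dualNumberToCuspQuot])
    (Ideal.Quotient.algHom_ext _ <| MvPolynomial.algHom_ext fun i => by
      fin_cases i <;> simp [dualNumberToCuspQuot, mk_X_one_eq_neg_mk_X_zero])

-- As an `R`-module, `R[ε] = TrivSqZeroExt R R` is `R × R` by definition.
theorem finrank_dualNumber [StrongRankCondition R] : Module.finrank R R[ε] = 2 :=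
  Module.finrank_prod (R := R) (M := R) (M' := R) |>.trans (by simp)

theorem X_zero_notMem_cuspDoublePointIdeal [Nontrivial R] :
    (X 0 : MvPolynomial (Fin 2) R) ∉ cuspDoublePointIdeal R := fun h => by
  have hε : (ε : R[ε]) = 0 := by simpa using cuspDoublePointIdeal_le_ker_aeval R h
  simpa using congrArg snd hε

end CuspDoublePoint

/-- For the ideal `I = (z₁ + z₂, z₁² + z₁z₂ + z₂²)` of `ℂ[z₁,z₂]`
(the double point ideal of the cusp), the quotient `ℂ[z₁,z₂]/I` is a 2-dimensional
ℂ-vector space, and `I` is not radical: `z₁ ∈ √I` but `z₁ ∉ I`.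
Here `z₁ = X 0`, `z₂ = X 1` in `MvPolynomial (Fin 2) ℂ`. -/
theorem cusp_double_point_ideal_nonreduced :
    Module.finrank ℂ
        (MvPolynomial (Fin 2) ℂ ⧸
          Ideal.span ({X 0 + X 1, (X 0) ^ 2 + X 0 * X 1 + (X 1) ^ 2} :
            Set (MvPolynomial (Fin 2) ℂ))) = 2 ∧
    (X 0 : MvPolynomial (Fin 2) ℂ) ∈
        (Ideal.span ({X 0 + X 1, (X 0) ^ 2 + X 0 * X 1 + (X 1) ^ 2} :
          Set (MvPolynomial (Fin 2) ℂ))).radical ∧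
    (X 0 : MvPolynomial (Fin 2) ℂ) ∉
        Ideal.span ({X 0 + X 1, (X 0) ^ 2 + X 0 * X 1 + (X 1) ^ 2} :
          Set (MvPolynomial (Fin 2) ℂ)) :=
  ⟨(cuspQuotEquivDualNumber ℂ).toLinearEquiv.finrank_eq.trans (finrank_dualNumber ℂ),
    ⟨2, X_zero_sq_mem_cuspDoublePointIdeal ℂ⟩, X_zero_notMem_cuspDoublePointIdeal ℂ⟩
end
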